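/- arXiv:1401.2110 — 2 statements merged into one kernel-verified Lean document; each statement's English description precedes it below -/
import Mathlib

section
/- Suppose a state |ψ⟩ = |0⟩⊗|θ⟩ + |1⟩⊗|φ⟩ on ℂ²⊗(ℂ²)^{⊗(n-1)} with ⟨θ|φ⟩ = 0 is fixed by a local unitary U = A ⊗ Ũ, where A = [[α, β],[-β*, α*]] ∈ SU(2) with β ≠ 0 and Ũ unitary on (ℂ²)^{⊗(n-1)}. Then ⟨θ|θ⟩ = ⟨φ|φ⟩, i.e., the reduced density matrix of the first qubit is maximally mixed (proportional to identity). -/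
open scoped InnerProductSpace ComplexConjugate

/-- If the state `|0⟩⊗θv + |1⟩⊗φv` (with `⟪θv,φv⟫ = 0`) is fixed by a local
unitary `A ⊗ Ũ` where `A = [[α,β],[-β*,α*]] ∈ SU(2)` has `β ≠ 0`, then
`⟪θv,θv⟫ = ⟪φv,φv⟫`, i.e. the first qubit's reduced density matrix is
maximally mixed. -/
theorem stmt_3 {E : Type*} [NormedAddCommGroup E] [InnerProductSpace ℂ E]
    (θv φv : E) (α β : ℂ) (hSU : Complex.normSq α + Complex.normSq β = 1)
    (hβ : β ≠ 0) (U : E ≃ₗᵢ[ℂ] E)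
    (horth : ⟪θv, φv⟫_ℂ = 0)
    -- `U|ψ⟩ = |ψ⟩`, component on `|0⟩` and component on `|1⟩`:
    (hfix0 : α • U θv + β • U φv = θv)
    (hfix1 : (-conj β) • U θv + (conj α) • U φv = φv) :
    ⟪θv, θv⟫_ℂ = ⟪φv, φv⟫_ℂ := by
  have hUθθ : ⟪U θv, U θv⟫_ℂ = ⟪θv, θv⟫_ℂ := U.inner_map_map _ _
  have hUφφ : ⟪U φv, U φv⟫_ℂ = ⟪φv, φv⟫_ℂ := U.inner_map_map _ _
  have hUθφ : ⟪U θv, U φv⟫_ℂ = 0 := by rw [U.inner_map_map]; exact horth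
  have hUφθ : ⟪U φv, U θv⟫_ℂ = 0 := by
    rw [← inner_conj_symm, hUθφ]; simp
  by_cases hα : α = 0
  · have hβ1 : Complex.normSq β = 1 := by simpa [hα] using hSU
    have hc : (conj β) * β = 1 := by
      rw [mul_comm, Complex.mul_conj, hβ1]; norm_num
    have h1 : θv = β • U φv := by rw [← hfix0, hα]; simp
    calc ⟪θv, θv⟫_ℂ = conj β * (β * ⟪U φv, U φv⟫_ℂ) := by
          rw [h1, inner_smul_left, inner_smul_right]
      _ = ⟪φv, φv⟫_ℂ := by rw [← mul_assoc, hc, one_mul, hUφφ]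
  · have key : ⟪α • U θv + β • U φv, (-conj β) • U θv + (conj α) • U φv⟫_ℂ = 0 := by
      rw [hfix0, hfix1]; exact horth
    simp only [inner_add_left, inner_add_right, inner_smul_left, inner_smul_right,
      hUθφ, hUφθ, hUθθ, hUφφ, mul_zero, zero_add, add_zero, map_neg,
      RingHom.id_apply, neg_mul, mul_neg] at key
    have hcα : conj α ≠ 0 := by simpa using hα
    have hcβ : conj β ≠ 0 := by simpa using hβ
    have : conj α * conj β * ⟪θv, θv⟫_ℂ = conj α * conj β * ⟪φv, φv⟫_ℂ := by
      linear_combination -key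
    exact mul_left_cancel₀ (mul_ne_zero hcα hcβ) this
end

section
/- Let H be a group of diagonal unitary matrices on ℂ^N = (ℂ²)^⊗n acting by phases on the computational basis, and suppose H acts non-trivially on every qubit (for each k there exists h ∈ H whose k-th single-qubit factor is not ±I). Then any f = f₁⊗…⊗fₙ ∈ SU(2)^{×n} normalizing H (fH f^{-1} = H as sets of operators up to overall phase ±1) satisfies: each fₖ is either diagonal or anti-diagonal (fₖ = [[α,0],[0,α*]] or fₖ = [[0,β],[-β*,0]]). -/
/-!
If both `αₖ` and `βₖ` were non-zero, comparing the top rows of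
`fₖ · diag(e^{iφ}, e^{-iφ}) = ±diag(e^{iφ'}, e^{-iφ'}) · fₖ` would give
`e^{iφ} = ±e^{iφ'} = e^{-iφ}`, i.e. `φ ∈ πℤ`; choosing `φ` from an element of `H` acting
non-trivially on qubit `k` rules this out.
-/

open scoped ComplexConjugate
open Matrix

noncomputable def diagSU2 (φ : ℝ) : Matrix (Fin 2) (Fin 2) ℂ :=
  !![Complex.exp (Complex.I * φ), 0; 0, Complex.exp (-(Complex.I * φ))]

open Complex

theorem exists_int_mul_pi_of_exp_I_mul_eq_exp_neg {φ : ℝ}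
    (h : exp (I * φ) = exp (-(I * φ))) : ∃ m : ℤ, φ = m * Real.pi := by
  obtain ⟨m, hm⟩ := exp_eq_exp_iff_exists_int.mp h
  refine ⟨m, ?_⟩
  have h2 : ((2 * φ : ℝ) : ℂ) * I = ((2 * (m * Real.pi) : ℝ) : ℂ) * I := by
    push_cast
    linear_combination hm
  linarith [ofReal_injective (mul_right_cancel₀ I_ne_zero h2)]

theorem exp_I_mul_eq_exp_neg_of_mul_diagSU2_eq {f : Matrix (Fin 2) (Fin 2) ℂ} {ε : ℂ} {φ ψ : ℝ}
    (h₀ : f 0 0 ≠ 0) (h₁ : f 0 1 ≠ 0) (h : f * diagSU2 φ = ε • (diagSU2 ψ * f)) :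
    exp (I * φ) = exp (-(I * φ)) := by
  have e₀ := congrFun (congrFun h 0) 0
  have e₁ := congrFun (congrFun h 0) 1
  simp only [diagSU2, mul_apply, Fin.sum_univ_two, Matrix.smul_apply, smul_eq_mul, of_apply,
    cons_val', cons_val_zero, cons_val_one, empty_val', cons_val_fin_one, mul_zero, zero_mul,
    add_zero, zero_add] at e₀ e₁
  calc exp (I * φ) = ε * exp (I * ψ) := mul_left_cancel₀ h₀ (by linear_combination e₀)
    _ = exp (-(I * φ)) := (mul_left_cancel₀ h₁ (by linear_combination e₁)).symm

/-- `H` is encoded by the parameter tuples `(φ₁,…,φₙ,θ)` of its elements and `fₖ` by `(αₖ, βₖ)`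
via `fₖ = [[αₖ,βₖ],[-βₖ*,αₖ*]]`; normalization is imposed factor by factor, up to a sign. -/
theorem stmt_5_general {n : ℕ} (H : Set ((Fin n → ℝ) × ℝ)) (α β : Fin n → ℂ)
    (hnontriv : ∀ k : Fin n, ∃ h ∈ H, ∀ m : ℤ, h.1 k ≠ m * Real.pi)
    (hnorm : ∀ h ∈ H, ∃ h' ∈ H, ∀ k : Fin n, ∃ ε : ℂ, (ε = 1 ∨ ε = -1) ∧
      !![α k, β k; -conj (β k), conj (α k)] * diagSU2 (h.1 k) =
        ε • (diagSU2 (h'.1 k) * !![α k, β k; -conj (β k), conj (α k)])) :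
    ∀ k : Fin n, β k = 0 ∨ α k = 0 := by
  intro k
  by_contra! ⟨hβ, hα⟩
  obtain ⟨h, hH, hφ⟩ := hnontriv k
  obtain ⟨h', -, hconj⟩ := hnorm h hH
  obtain ⟨ε, -, heq⟩ := hconj k
  obtain ⟨m, hm⟩ :=
    exists_int_mul_pi_of_exp_I_mul_eq_exp_neg (exp_I_mul_eq_exp_neg_of_mul_diagSU2_eq hα hβ heq)
  exact hφ m hm

/-- Let `H` (a set of parameter tuples `(φ₁,…,φₙ,θ)`) be a group of diagonal
local unitaries acting non-trivially on every qubit.  If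
`f = f₁⊗…⊗fₙ ∈ SU(2)^{×n}`, with `fₖ = [[αₖ,βₖ],[-βₖ*,αₖ*]]`, normalizes `H`
(each single-qubit factor relation holding up to a sign `±1`), then each `fₖ`
is diagonal (`βₖ = 0`) or anti-diagonal (`αₖ = 0`). -/
theorem stmt_5 {n : ℕ} (H : Set ((Fin n → ℝ) × ℝ)) (α β : Fin n → ℂ)
    (hSU : ∀ k, Complex.normSq (α k) + Complex.normSq (β k) = 1)
    (hnontriv : ∀ k : Fin n, ∃ h ∈ H, ∀ m : ℤ, h.1 k ≠ m * Real.pi)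
    (hnorm : ∀ h ∈ H, ∃ h' ∈ H, ∀ k : Fin n, ∃ ε : ℂ, (ε = 1 ∨ ε = -1) ∧
      !![α k, β k; -conj (β k), conj (α k)] * diagSU2 (h.1 k) =
        ε • (diagSU2 (h'.1 k) * !![α k, β k; -conj (β k), conj (α k)]))
    (hnorm' : ∀ h ∈ H, ∃ h' ∈ H, ∀ k : Fin n, ∃ ε : ℂ, (ε = 1 ∨ ε = -1) ∧
      diagSU2 (h.1 k) * !![α k, β k; -conj (β k), conj (α k)] =
        ε • (!![α k, β k; -conj (β k), conj (α k)] * diagSU2 (h'.1 k))) :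
    ∀ k : Fin n, β k = 0 ∨ α k = 0 :=
  stmt_5_general H α β hnontriv hnorm
end
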